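/- Let ψ ∈ ℂ^(2^L) ⊗ ℂ^(2^M) and φ ∈ ℂ^(2^L) ⊗ ℂ^(2^M) be unit vectors with equal partial traces over the second factor, and suppose each is an eigenvector of the total parity operator P_L ⊗ P_M (i.e., (P_L ⊗ P_M)ψ = ±ψ and (P_L ⊗ P_M)φ = ±φ, with possibly different signs). Then there exists a unitary matrix U on ℂ^(2^M) such that (I ⊗ U)ψ = φ and U maps definite-parity vectors to definite-parity vectors: for every v ∈ ℂ^(2^M) with P_M v = v or P_M v = −v, the vector Uv satisfies P_M(Uv) = Uv or P_M(Uv) = −Uv. -/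

import Mathlib

open Matrix
open scoped Kronecker ComplexOrder

noncomputable section

/-- Bit strings of length `L`. -/
abbrev BitStr (L : ℕ) := Fin L → Fin 2

/-- The parity operator `P_L = Z^{⊗L}` on `ℂ^(2^L)`: the diagonal matrix with entries
`(−1)^(s₁+⋯+s_L)`. -/
def parityOp (L : ℕ) : Matrix (BitStr L) (BitStr L) ℂ :=
  Matrix.diagonal fun s => (-1 : ℂ) ^ (∑ i, (s i : ℕ))

/-- Partial trace over the second tensor factor. -/
def ptrace2 {α β : Type*} [Fintype β] (M : Matrix (α × β) (α × β) ℂ) : Matrix α α ℂ :=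
  Matrix.of fun i i' => ∑ j, M (i, j) (i', j)

/-! ### Auxiliary material -/

open scoped InnerProductSpace

section Gram

variable {ι : Type*} [Fintype ι] {V : Type*} [NormedAddCommGroup V]
  [InnerProductSpace ℂ V] [FiniteDimensional ℂ V]

/-- Two families with equal Gram matrices are related by a linear isometry equivalence. -/
lemma gram_to_isometry (x y : ι → V)
    (h : ∀ i j, ⟪x i, x j⟫_ℂ = ⟪y i, y j⟫_ℂ) :
    ∃ U : V ≃ₗᵢ[ℂ] V, ∀ i, U (x i) = y i := by
  classical
  let F : (ι → ℂ) →ₗ[ℂ] V :=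
    { toFun := fun c => ∑ i, c i • x i
      map_add' := by intro a b; simp [add_smul, Finset.sum_add_distrib]
      map_smul' := by intro m a; simp [smul_smul, Finset.smul_sum] }
  let G : (ι → ℂ) →ₗ[ℂ] V :=
    { toFun := fun c => ∑ i, c i • y i
      map_add' := by intro a b; simp [add_smul, Finset.sum_add_distrib]
      map_smul' := by intro m a; simp [smul_smul, Finset.smul_sum] }
  have key : ∀ c c' : ι → ℂ, ⟪F c, F c'⟫_ℂ = ⟪G c, G c'⟫_ℂ := by
    intro c c'
    simp only [F, G, LinearMap.coe_mk, AddHom.coe_mk, sum_inner, inner_sum,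
      inner_smul_left, inner_smul_right, h]
  have hnorm : ∀ c : ι → ℂ, ‖F c‖ = ‖G c‖ := by
    intro c
    rw [@norm_eq_sqrt_re_inner ℂ, @norm_eq_sqrt_re_inner ℂ, key]
  have hker : LinearMap.ker F ≤ LinearMap.ker G := by
    intro c hc
    rw [LinearMap.mem_ker] at hc ⊢
    rw [← norm_eq_zero, ← hnorm, hc, norm_zero]
  let Gbar : ((ι → ℂ) ⧸ LinearMap.ker F) →ₗ[ℂ] V := (LinearMap.ker F).liftQ G hker
  let T : LinearMap.range F →ₗ[ℂ] V := Gbar ∘ₗ (F.quotKerEquivRange.symm : _ →ₗ[ℂ] _)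
  have hT : ∀ c : ι → ℂ, T ⟨F c, LinearMap.mem_range_self F c⟩ = G c := by
    intro c
    simp only [T, LinearMap.coe_comp, Function.comp_apply, LinearEquiv.coe_coe]
    rw [LinearMap.quotKerEquivRange_symm_apply_image]
    simp [Gbar]
  have hTnorm : ∀ s : LinearMap.range F, ‖T s‖ = ‖s‖ := by
    rintro ⟨s, hs⟩
    obtain ⟨c, rfl⟩ := hs
    rw [hT c, Submodule.coe_norm, hnorm]
  let L : LinearMap.range F →ₗᵢ[ℂ] V := ⟨T, hTnorm⟩
  let U := L.extend.toLinearIsometryEquiv rfl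
  refine ⟨U, fun i => ?_⟩
  have hx : x i = F (Pi.single i 1) := by
    simp only [F, LinearMap.coe_mk, AddHom.coe_mk]
    rw [Finset.sum_eq_single i]
    · simp
    · intro b _ hb; simp [Pi.single_eq_of_ne hb]
    · intro hi; exact absurd (Finset.mem_univ i) hi
  have hy : y i = G (Pi.single i 1) := by
    simp only [G, LinearMap.coe_mk, AddHom.coe_mk]
    rw [Finset.sum_eq_single i]
    · simp
    · intro b _ hb; simp [Pi.single_eq_of_ne hb]
    · intro hi; exact absurd (Finset.mem_univ i) hi
  have : U (x i) = L.extend (x i) := L.extend.toLinearIsometryEquiv_apply rfl (x i)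
  rw [this, hx, hy]
  have := L.extend_apply ⟨F (Pi.single i 1), LinearMap.mem_range_self F _⟩
  rw [this]
  exact hT _

/-- The parity-respecting version: if both families consist of eigenvectors of a self-adjoint
involution `P` with matching signs, the isometry can be chosen to commute with `P`. -/
lemma gram_to_isometry_comm (P : V →ₗ[ℂ] V)
    (hP2 : ∀ v, P (P v) = v) (hPsa : ∀ u v, ⟪P u, v⟫_ℂ = ⟪u, P v⟫_ℂ)
    (σ : ι → ℂ) (hσ : ∀ i, σ i = 1 ∨ σ i = -1)
    (x y : ι → V) (h : ∀ i j, ⟪x i, x j⟫_ℂ = ⟪y i, y j⟫_ℂ)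
    (hx : ∀ i, P (x i) = σ i • x i) (hy : ∀ i, P (y i) = σ i • y i) :
    ∃ U : V ≃ₗᵢ[ℂ] V, (∀ i, U (x i) = y i) ∧ ∀ v, U (P v) = P (U v) := by
  classical
  set Ep : Submodule ℂ V := LinearMap.ker (P - LinearMap.id) with hEp
  set Em : Submodule ℂ V := LinearMap.ker (P + LinearMap.id) with hEm
  have memp : ∀ v, v ∈ Ep ↔ P v = v := by
    intro v; rw [hEp, LinearMap.mem_ker, LinearMap.sub_apply, LinearMap.id_apply, sub_eq_zero]
  have memm : ∀ v, v ∈ Em ↔ P v = -v := by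
    intro v
    rw [hEm, LinearMap.mem_ker, LinearMap.add_apply, LinearMap.id_apply, add_eq_zero_iff_eq_neg]
  have horth : ∀ u w : V, P u = u → P w = -w → ⟪u, w⟫_ℂ = 0 := by
    intro u w hu hw
    have : ⟪u, w⟫_ℂ = -⟪u, w⟫_ℂ := by
      conv_lhs => rw [← hu]
      rw [hPsa, hw, inner_neg_right]
    linear_combination this / 2
  have hone : (1:ℂ) ≠ -1 := by norm_num
  let xp : ι → Ep := fun i =>
    if hi : σ i = 1 then ⟨x i, (memp _).2 (by rw [hx i, hi, one_smul])⟩ else 0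
  let yp : ι → Ep := fun i =>
    if hi : σ i = 1 then ⟨y i, (memp _).2 (by rw [hy i, hi, one_smul])⟩ else 0
  let xm : ι → Em := fun i =>
    if hi : σ i = -1 then ⟨x i, (memm _).2 (by rw [hx i, hi, neg_one_smul])⟩ else 0
  let ym : ι → Em := fun i =>
    if hi : σ i = -1 then ⟨y i, (memm _).2 (by rw [hy i, hi, neg_one_smul])⟩ else 0
  have hgp : ∀ i j, ⟪xp i, xp j⟫_ℂ = ⟪yp i, yp j⟫_ℂ := by
    intro i j
    rw [Submodule.coe_inner, Submodule.coe_inner]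
    by_cases hi : σ i = 1 <;> by_cases hj : σ j = 1 <;>
      simp [xp, yp, hi, hj, h i j]
  have hgm : ∀ i j, ⟪xm i, xm j⟫_ℂ = ⟪ym i, ym j⟫_ℂ := by
    intro i j
    rw [Submodule.coe_inner, Submodule.coe_inner]
    by_cases hi : σ i = -1 <;> by_cases hj : σ j = -1 <;>
      simp [xm, ym, hi, hj, h i j]
  obtain ⟨Up, hUp⟩ := gram_to_isometry xp yp hgp
  obtain ⟨Um, hUm⟩ := gram_to_isometry xm ym hgm
  let pp : V →ₗ[ℂ] V := (2:ℂ)⁻¹ • (LinearMap.id + P)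
  let pm : V →ₗ[ℂ] V := (2:ℂ)⁻¹ • (LinearMap.id - P)
  have hppv : ∀ v, pp v = (2:ℂ)⁻¹ • (v + P v) := fun v => rfl
  have hpmv : ∀ v, pm v = (2:ℂ)⁻¹ • (v - P v) := fun v => rfl
  have hppmem : ∀ v, pp v ∈ Ep := by
    intro v
    rw [memp, hppv, _root_.map_smul, map_add, hP2, add_comm]
  have hpmmem : ∀ v, pm v ∈ Em := by
    intro v
    rw [memm, hpmv, _root_.map_smul, map_sub, hP2, ← smul_neg, neg_sub]
  have hsum : ∀ v, pp v + pm v = v := by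
    intro v
    rw [hppv, hpmv, ← smul_add]
    have : (v + P v) + (v - P v) = (2:ℂ) • v := by rw [two_smul]; abel
    rw [this, smul_smul, inv_mul_cancel₀ two_ne_zero, one_smul]
  let Ppl : V →ₗ[ℂ] Ep := pp.codRestrict Ep hppmem
  let Pml : V →ₗ[ℂ] Em := pm.codRestrict Em hpmmem
  have hPplv : ∀ v, (Ppl v : V) = pp v := fun v => rfl
  have hPmlv : ∀ v, (Pml v : V) = pm v := fun v => rfl
  let Ulin : V →ₗ[ℂ] V :=
    Ep.subtype ∘ₗ (Up.toLinearEquiv : Ep →ₗ[ℂ] Ep) ∘ₗ Ppl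
      + Em.subtype ∘ₗ (Um.toLinearEquiv : Em →ₗ[ℂ] Em) ∘ₗ Pml
  have hUlin : ∀ v, Ulin v = ↑(Up (Ppl v)) + ↑(Um (Pml v)) := fun v => rfl
  have hUnorm : ∀ v, ‖Ulin v‖ = ‖v‖ := by
    intro v
    have h1 : ⟪(↑(Up (Ppl v)) : V), (↑(Um (Pml v)) : V)⟫_ℂ = 0 :=
      horth _ _ ((memp _).1 (Up (Ppl v)).2) ((memm _).1 (Um (Pml v)).2)
    have h2 : ⟪pp v, pm v⟫_ℂ = 0 := horth _ _ ((memp _).1 (hppmem v)) ((memm _).1 (hpmmem v))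
    rw [← sq_eq_sq₀ (norm_nonneg _) (norm_nonneg _)]
    have e1 : ‖Ulin v‖ ^ 2 = ‖(↑(Up (Ppl v)) : V)‖ ^ 2 + ‖(↑(Um (Pml v)) : V)‖ ^ 2 := by
      rw [hUlin, pow_two, pow_two, pow_two]
      exact norm_add_sq_eq_norm_sq_add_norm_sq_of_inner_eq_zero _ _ h1
    have e2 : ‖v‖ ^ 2 = ‖pp v‖ ^ 2 + ‖pm v‖ ^ 2 := by
      rw [pow_two, pow_two, pow_two]
      conv_lhs => rw [← hsum v]
      exact norm_add_sq_eq_norm_sq_add_norm_sq_of_inner_eq_zero _ _ h2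
    rw [e1, e2]
    have n1 : ‖(↑(Up (Ppl v)) : V)‖ = ‖pp v‖ := by
      rw [← Submodule.coe_norm, Up.norm_map, Submodule.coe_norm, hPplv]
    have n2 : ‖(↑(Um (Pml v)) : V)‖ = ‖pm v‖ := by
      rw [← Submodule.coe_norm, Um.norm_map, Submodule.coe_norm, hPmlv]
    rw [n1, n2]
  let Uli : V →ₗᵢ[ℂ] V := ⟨Ulin, hUnorm⟩
  let U := Uli.toLinearIsometryEquiv rfl
  have hUv : ∀ v, U v = Ulin v := fun v => Uli.toLinearIsometryEquiv_apply rfl v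
  refine ⟨U, fun i => ?_, fun v => ?_⟩
  · rw [hUv, hUlin]
    rcases hσ i with hi | hi
    · have hine : σ i ≠ -1 := by rw [hi]; exact hone
      have hx' : Ppl (x i) = xp i := by
        apply Subtype.ext
        rw [hPplv, hppv, hx i, hi, one_smul]
        simp only [xp, dif_pos hi]
        have : x i + x i = (2:ℂ) • x i := by rw [two_smul]
        rw [this, smul_smul, inv_mul_cancel₀ two_ne_zero, one_smul]
      have hx'' : Pml (x i) = xm i := by
        apply Subtype.ext
        rw [hPmlv, hpmv, hx i, hi, one_smul, sub_self, smul_zero]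
        simp only [xm, dif_neg hine, Submodule.coe_zero]
      rw [hx', hx'', hUp, hUm]
      simp only [yp, ym, dif_pos hi, dif_neg hine, Submodule.coe_zero, add_zero]
    · have hine : σ i ≠ 1 := by rw [hi]; exact Ne.symm hone
      have hx' : Ppl (x i) = xp i := by
        apply Subtype.ext
        rw [hPplv, hppv, hx i, hi, neg_one_smul, add_neg_cancel, smul_zero]
        simp only [xp, dif_neg hine, Submodule.coe_zero]
      have hx'' : Pml (x i) = xm i := by
        apply Subtype.ext
        rw [hPmlv, hpmv, hx i, hi, neg_one_smul, sub_neg_eq_add]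
        simp only [xm, dif_pos hi]
        have : x i + x i = (2:ℂ) • x i := by rw [two_smul]
        rw [this, smul_smul, inv_mul_cancel₀ two_ne_zero, one_smul]
      rw [hx', hx'', hUp, hUm]
      simp only [yp, ym, dif_pos hi, dif_neg hine, Submodule.coe_zero, zero_add]
  · rw [hUv, hUv, hUlin, hUlin]
    have e1 : Ppl (P v) = Ppl v := by
      apply Subtype.ext
      rw [hPplv, hPplv, hppv, hppv, hP2, add_comm]
    have e2 : Pml (P v) = -Pml v := by
      apply Subtype.ext
      rw [hPmlv, Submodule.coe_neg, hPmlv, hpmv, hpmv, hP2, ← smul_neg, neg_sub]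
    rw [e1, e2, map_neg, map_add]
    have f1 : P ↑(Up (Ppl v)) = ↑(Up (Ppl v)) := (memp _).1 (Up (Ppl v)).2
    have f2 : P ↑(Um (Pml v)) = -↑(Um (Pml v)) := (memm _).1 (Um (Pml v)).2
    rw [f1, f2, Submodule.coe_neg]

end Gram

/-! ### Concrete bit-string helpers -/

def parC {K : ℕ} (s : BitStr K) : ℂ := (-1) ^ (∑ i, (s i : ℕ))

lemma parC_sq {K : ℕ} (s : BitStr K) : parC s * parC s = 1 := by
  rw [parC, ← pow_add]
  exact Even.neg_one_pow ⟨_, rfl⟩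

lemma parC_pm {K : ℕ} (s : BitStr K) : parC s = 1 ∨ parC s = -1 := by
  rcases Nat.even_or_odd (∑ i, (s i : ℕ)) with h | h
  · exact Or.inl (h.neg_one_pow)
  · exact Or.inr (h.neg_one_pow)

lemma parC_conj {K : ℕ} (s : BitStr K) : (starRingEnd ℂ) (parC s) = parC s := by
  rcases parC_pm s with h | h <;> rw [h] <;> simp

lemma parity_mulVec {K : ℕ} (w : BitStr K → ℂ) (j : BitStr K) :
    (parityOp K *ᵥ w) j = parC j * w j := by
  rw [parityOp, mulVec_diagonal]; rfl

lemma eps_extract {L M : ℕ} (ψ : BitStr L × BitStr M → ℂ)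
    (h : (parityOp L ⊗ₖ parityOp M).mulVec ψ = ψ ∨
         (parityOp L ⊗ₖ parityOp M).mulVec ψ = -ψ) :
    ∃ ε : ℂ, (ε = 1 ∨ ε = -1) ∧ ∀ i j, parC i * parC j * ψ (i, j) = ε * ψ (i, j) := by
  have hdiag : (parityOp L ⊗ₖ parityOp M) =
      Matrix.diagonal (fun p : BitStr L × BitStr M => parC p.1 * parC p.2) := by
    rw [parityOp, parityOp, Matrix.diagonal_kronecker_diagonal]; rfl
  have hent : ∀ i j, ((parityOp L ⊗ₖ parityOp M) *ᵥ ψ) (i, j) = parC i * parC j * ψ (i, j) := by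
    intro i j
    rw [hdiag, mulVec_diagonal]
  rcases h with h | h
  · exact ⟨1, Or.inl rfl, fun i j => by rw [← hent, h, one_mul]⟩
  · refine ⟨-1, Or.inr rfl, fun i j => ?_⟩
    rw [← hent, h]
    simp

def eqv (M : ℕ) : EuclideanSpace ℂ (BitStr M) ≃ₗ[ℂ] (BitStr M → ℂ) :=
  WithLp.linearEquiv 2 ℂ _

def Plin (M : ℕ) : EuclideanSpace ℂ (BitStr M) →ₗ[ℂ] EuclideanSpace ℂ (BitStr M) :=
  (eqv M).symm.toLinearMap ∘ₗ (Matrix.mulVecLin (parityOp M)) ∘ₗ (eqv M).toLinearMap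

lemma Plin_apply {M : ℕ} (v : EuclideanSpace ℂ (BitStr M)) :
    Plin M v = (eqv M).symm (parityOp M *ᵥ (eqv M v)) := rfl

lemma Plin_coord {M : ℕ} (v : EuclideanSpace ℂ (BitStr M)) (k : BitStr M) :
    Plin M v k = parC k * v k := parity_mulVec (eqv M v) k

lemma eucl_ext {M : ℕ} {u v : EuclideanSpace ℂ (BitStr M)} (h : ∀ k, u k = v k) : u = v :=
  PiLp.ext h

lemma Plin_invol {M : ℕ} (v : EuclideanSpace ℂ (BitStr M)) : Plin M (Plin M v) = v := by
  apply eucl_ext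
  intro k
  rw [Plin_coord, Plin_coord, ← mul_assoc, parC_sq, one_mul]

lemma Plin_sa {M : ℕ} (u v : EuclideanSpace ℂ (BitStr M)) :
    ⟪Plin M u, v⟫_ℂ = ⟪u, Plin M v⟫_ℂ := by
  rw [PiLp.inner_apply, PiLp.inner_apply]
  simp only [RCLike.inner_apply, Plin_coord]
  refine Finset.sum_congr rfl fun k _ => ?_
  rw [_root_.map_mul, parC_conj]
  ring

lemma matrix_of_isometry {L M : ℕ} (ψ φ : BitStr L × BitStr M → ℂ)
    (U : EuclideanSpace ℂ (BitStr M) →ₗ[ℂ] EuclideanSpace ℂ (BitStr M))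
    (hinner : ∀ u v, ⟪U u, U v⟫_ℂ = ⟪u, v⟫_ℂ)
    (hUx : ∀ i, U ((eqv M).symm fun j => ψ (i, j)) = (eqv M).symm fun j => φ (i, j))
    (η : ℂ) (hη : η = 1 ∨ η = -1)
    (hcomm : ∀ v, Plin M (U v) = η • U (Plin M v)) :
    ∃ Um : Matrix (BitStr M) (BitStr M) ℂ,
      Umᴴ * Um = 1 ∧ Um * Umᴴ = 1 ∧
      ((1 : Matrix (BitStr L) (BitStr L) ℂ) ⊗ₖ Um).mulVec ψ = φ ∧
      ∀ v : BitStr M → ℂ,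
        ((parityOp M).mulVec v = v ∨ (parityOp M).mulVec v = -v) →
        ((parityOp M).mulVec (Um.mulVec v) = Um.mulVec v ∨
          (parityOp M).mulVec (Um.mulVec v) = -(Um.mulVec v)) := by
  classical
  set e := eqv M with he
  let Um : Matrix (BitStr M) (BitStr M) ℂ :=
    Matrix.of fun j j' => e (U (e.symm (Pi.single j' 1))) j
  have hUm : ∀ j j', Um j j' = (U (e.symm (Pi.single j' 1))) j := fun j j' => rfl
  have hw : ∀ w : BitStr M → ℂ, w = ∑ j', w j' • (Pi.single j' 1 : BitStr M → ℂ) := by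
    intro w; funext k
    rw [Finset.sum_apply]
    simp [Pi.single_apply]
  have hmul : ∀ w : BitStr M → ℂ, Um *ᵥ w = e (U (e.symm w)) := by
    intro w
    funext j
    have hsw : e.symm w = ∑ j', w j' • e.symm (Pi.single j' 1) := by
      conv_lhs => rw [hw w]
      rw [map_sum]
      simp only [_root_.map_smul]
    calc (Um *ᵥ w) j = ∑ j', Um j j' * w j' := rfl
      _ = e (U (e.symm w)) j := by
          rw [hsw]
          simp only [map_sum, _root_.map_smul, Finset.sum_apply, Pi.smul_apply, smul_eq_mul]
          exact Finset.sum_congr rfl fun j' _ => by rw [mul_comm]; rfl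
  have hU1 : Umᴴ * Um = 1 := by
    ext j j'
    have l1 : (Umᴴ * Um) j j' = ∑ k, (starRingEnd ℂ) (Um k j) * Um k j' := by
      simp [Matrix.mul_apply, Matrix.conjTranspose_apply]
    have l2 : ∑ k, (starRingEnd ℂ) (Um k j) * Um k j'
        = ⟪U (e.symm (Pi.single j (1:ℂ))), U (e.symm (Pi.single j' 1))⟫_ℂ := by
      rw [PiLp.inner_apply]
      simp only [RCLike.inner_apply, hUm]
      exact Finset.sum_congr rfl fun _ _ => mul_comm _ _
    rw [l1, l2, hinner, PiLp.inner_apply]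
    simp only [RCLike.inner_apply]
    have l3 : ∀ (jj : BitStr M) k,
        (e.symm (Pi.single jj (1:ℂ))) k = (Pi.single jj (1:ℂ) : BitStr M → ℂ) k :=
      fun _ _ => rfl
    simp only [l3]
    simp [Pi.single_apply, apply_ite, Matrix.one_apply, Finset.sum_ite_eq]
  have hkron : ((1 : Matrix (BitStr L) (BitStr L) ℂ) ⊗ₖ Um) *ᵥ ψ = φ := by
    funext p
    obtain ⟨i, j⟩ := p
    have l1 : (((1 : Matrix (BitStr L) (BitStr L) ℂ) ⊗ₖ Um) *ᵥ ψ) (i, j)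
        = ∑ i', ∑ j', (1 : Matrix (BitStr L) (BitStr L) ℂ) i i' * Um j j' * ψ (i', j') := by
      show ∑ p : BitStr L × BitStr M,
          ((1 : Matrix (BitStr L) (BitStr L) ℂ) ⊗ₖ Um) (i, j) p * ψ p = _
      rw [Fintype.sum_prod_type]
      rfl
    rw [l1]
    have l2 : ∑ i', ∑ j', (1 : Matrix (BitStr L) (BitStr L) ℂ) i i' * Um j j' * ψ (i', j')
        = ∑ j', Um j j' * ψ (i, j') := by
      rw [Finset.sum_comm]
      simp [Matrix.one_apply, ite_mul, Finset.sum_ite_eq]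
    rw [l2]
    have l3 : (Um *ᵥ fun j' => ψ (i, j')) j = φ (i, j) := by
      rw [hmul, hUx i, LinearEquiv.apply_symm_apply]
    rw [← l3]
    rfl
  have hPmulVec : ∀ w : BitStr M → ℂ, parityOp M *ᵥ w = e (Plin M (e.symm w)) := by
    intro w
    rw [Plin_apply, LinearEquiv.apply_symm_apply, LinearEquiv.apply_symm_apply]
  refine ⟨Um, hU1, mul_eq_one_comm.mp hU1, hkron, fun v hv => ?_⟩
  have key : parityOp M *ᵥ (Um *ᵥ v) = η • (Um *ᵥ (parityOp M *ᵥ v)) := by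
    rw [hPmulVec, hmul, LinearEquiv.symm_apply_apply, hcomm, hPmulVec, hmul,
      LinearEquiv.symm_apply_apply, _root_.map_smul]
  rcases hv with hv | hv <;> rcases hη with hη | hη <;> rw [hv] at key
  · left; rw [key, hη, one_smul]
  · right; rw [key, hη, neg_smul, one_smul]
  · right; rw [key, hη, Matrix.mulVec_neg, one_smul]
  · left; rw [key, hη, Matrix.mulVec_neg, neg_smul, one_smul, neg_neg]

/-! ### Main theorem -/

set_option maxHeartbeats 2000000 in
/-- Two definite-parity unit vectors with equal marginals on the first factor are related by
a unitary on the second factor that maps definite-parity vectors to definite-parity vectors. -/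
theorem parity_respecting_unitary_connecting_purifications (L M : ℕ)
    (ψ φ : BitStr L × BitStr M → ℂ)
    (hψ1 : star ψ ⬝ᵥ ψ = 1) (hφ1 : star φ ⬝ᵥ φ = 1)
    (heq : ptrace2 (Matrix.vecMulVec ψ (star ψ)) = ptrace2 (Matrix.vecMulVec φ (star φ)))
    (hψp : (parityOp L ⊗ₖ parityOp M).mulVec ψ = ψ ∨
           (parityOp L ⊗ₖ parityOp M).mulVec ψ = -ψ)
    (hφp : (parityOp L ⊗ₖ parityOp M).mulVec φ = φ ∨
           (parityOp L ⊗ₖ parityOp M).mulVec φ = -φ) :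
    ∃ U : Matrix (BitStr M) (BitStr M) ℂ,
      Uᴴ * U = 1 ∧ U * Uᴴ = 1 ∧
      ((1 : Matrix (BitStr L) (BitStr L) ℂ) ⊗ₖ U).mulVec ψ = φ ∧
      ∀ v : BitStr M → ℂ,
        ((parityOp M).mulVec v = v ∨ (parityOp M).mulVec v = -v) →
        ((parityOp M).mulVec (U.mulVec v) = U.mulVec v ∨
          (parityOp M).mulVec (U.mulVec v) = -(U.mulVec v)) := by
  classical
  obtain ⟨εψ, hεψ, hψ'⟩ := eps_extract ψ hψp
  obtain ⟨εφ, hεφ, hφ'⟩ := eps_extract φ hφp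
  let x : BitStr L → EuclideanSpace ℂ (BitStr M) := fun i => (eqv M).symm fun j => ψ (i, j)
  let y : BitStr L → EuclideanSpace ℂ (BitStr M) := fun i => (eqv M).symm fun j => φ (i, j)
  have hxc : ∀ i j, x i j = ψ (i, j) := fun _ _ => rfl
  have hyc : ∀ i j, y i j = φ (i, j) := fun _ _ => rfl
  have hgram : ∀ i i', ⟪x i, x i'⟫_ℂ = ⟪y i, y i'⟫_ℂ := by
    intro i i'
    have hh : ptrace2 (Matrix.vecMulVec ψ (star ψ)) i' i
        = ptrace2 (Matrix.vecMulVec φ (star φ)) i' i := by rw [heq]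
    simp only [ptrace2, Matrix.of_apply, Matrix.vecMulVec_apply, Pi.star_apply,
      RCLike.star_def] at hh
    rw [PiLp.inner_apply, PiLp.inner_apply]
    simp only [RCLike.inner_apply, hxc, hyc]
    exact hh
  have hx : ∀ i, Plin M (x i) = (εψ * parC i) • x i := by
    intro i
    apply eucl_ext
    intro j
    rw [Plin_coord]
    have hr : ((εψ * parC i) • x i) j = (εψ * parC i) * x i j := rfl
    rw [hr, hxc]
    have h1 := hψ' i j
    have h2 := parC_sq i
    linear_combination parC i * h1 - parC j * ψ (i, j) * h2
  have hy : ∀ i, Plin M (y i) = (εφ * parC i) • y i := by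
    intro i
    apply eucl_ext
    intro j
    rw [Plin_coord]
    have hr : ((εφ * parC i) • y i) j = (εφ * parC i) * y i j := rfl
    rw [hr, hyc]
    have h1 := hφ' i j
    have h2 := parC_sq i
    linear_combination parC i * h1 - parC j * φ (i, j) * h2
  have hσpm : ∀ i : BitStr L, εψ * parC i = 1 ∨ εψ * parC i = -1 := by
    intro i
    rcases hεψ with h | h <;> rcases parC_pm i with h' | h' <;> rw [h, h'] <;> norm_num
  by_cases hcase : εψ = εφ
  · -- same total parity sign
    obtain ⟨U, hUx, hUP⟩ := gram_to_isometry_comm (Plin M) Plin_invol Plin_sa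
      (fun i => εψ * parC i) hσpm x y hgram hx (fun i => by rw [hcase]; exact hy i)
    obtain ⟨Um, h1, h2, h3, h4⟩ := matrix_of_isometry ψ φ
      (U.toLinearEquiv : _ →ₗ[ℂ] _)
      (fun u v => U.inner_map_map u v)
      (fun i => hUx i)
      1 (Or.inl rfl)
      (fun v => by rw [one_smul]; exact (hUP v).symm)
    exact ⟨Um, h1, h2, h3, h4⟩
  · rcases Nat.eq_zero_or_pos M with hM | hM
    · -- M = 0 : the parity operator on the second factor is the identity
      subst hM
      have hpar1 : ∀ j : BitStr 0, parC j = 1 := by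
        intro j
        simp [parC]
      have hPid : ∀ v : EuclideanSpace ℂ (BitStr 0), Plin 0 v = v := by
        intro v
        apply eucl_ext
        intro k
        rw [Plin_coord, hpar1, one_mul]
      obtain ⟨U, hUx, hUP⟩ := gram_to_isometry_comm (Plin 0) Plin_invol Plin_sa
        (fun _ => (1:ℂ)) (fun _ => Or.inl rfl) x y hgram
        (fun i => by rw [hPid, one_smul]) (fun i => by rw [hPid, one_smul])
      obtain ⟨Um, h1, h2, h3, h4⟩ := matrix_of_isometry ψ φ
        (U.toLinearEquiv : _ →ₗ[ℂ] _)
        (fun u v => U.inner_map_map u v)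
        (fun i => hUx i)
        1 (Or.inl rfl)
        (fun v => by rw [one_smul]; exact (hUP v).symm)
      exact ⟨Um, h1, h2, h3, h4⟩
    · -- M ≥ 1 and opposite signs: conjugate by a bit flip on the first qubit
      have hεφ' : εφ = -εψ := by
        rcases hεψ with h | h <;> rcases hεφ with h' | h' <;>
          first
            | (exfalso; exact hcase (h.trans h'.symm))
            | simp [h, h']
      set i₀ : Fin M := ⟨0, hM⟩ with hi₀
      let flip : BitStr M → BitStr M := fun s => Function.update s i₀ (s i₀ + 1)
      have hbit : ∀ b : Fin 2, b + 1 + 1 = b := by decide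
      have hflip2 : ∀ s, flip (flip s) = s := by
        intro s
        funext k
        by_cases hk : k = i₀
        · subst hk
          simp [flip, Function.update_self, hbit]
        · simp [flip, Function.update_of_ne hk]
      have hbitpow : ∀ b : Fin 2, ((-1:ℂ)) ^ (((b+1) : Fin 2) : ℕ) = -(-1) ^ ((b : Fin 2) : ℕ) := by
        intro b
        fin_cases b <;> norm_num [show ((2:Fin 2):ℕ) = 0 from rfl, show ((1 + 1 : Fin 2):ℕ) = 0 from rfl]
      have hflippar : ∀ s, parC (flip s) = -parC s := by
        intro s
        rw [parC, parC, ← Finset.prod_pow_eq_pow_sum, ← Finset.prod_pow_eq_pow_sum]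
        rw [Fintype.prod_eq_mul_prod_compl i₀, Fintype.prod_eq_mul_prod_compl i₀]
        have hrest : ∀ k ∈ ({i₀}ᶜ : Finset (Fin M)),
            ((-1:ℂ)) ^ ((flip s k : ℕ)) = (-1) ^ ((s k : ℕ)) := by
          intro k hk
          have hk' : k ≠ i₀ := by simpa using hk
          rw [show flip s k = s k from Function.update_of_ne hk' _ _]
        rw [Finset.prod_congr rfl hrest]
        have h0 : flip s i₀ = s i₀ + 1 := Function.update_self _ _ _
        rw [h0, hbitpow, neg_mul]
      let Jlin : EuclideanSpace ℂ (BitStr M) →ₗ[ℂ] EuclideanSpace ℂ (BitStr M) :=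
        (eqv M).symm.toLinearMap ∘ₗ (LinearMap.funLeft ℂ ℂ flip) ∘ₗ (eqv M).toLinearMap
      have hJapp : ∀ (v : EuclideanSpace ℂ (BitStr M)) k, Jlin v k = v (flip k) :=
        fun _ _ => rfl
      have hJ2 : ∀ v, Jlin (Jlin v) = v := by
        intro v
        apply eucl_ext
        intro k
        rw [hJapp, hJapp, hflip2]
      have hbij : Function.Bijective flip := Function.Involutive.bijective hflip2
      have hJinner : ∀ u v, ⟪Jlin u, Jlin v⟫_ℂ = ⟪u, v⟫_ℂ := by
        intro u v
        rw [PiLp.inner_apply, PiLp.inner_apply]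
        simp only [RCLike.inner_apply, hJapp]
        exact Fintype.sum_bijective flip hbij _ _ (fun k => rfl)
      have hPJ : ∀ v, Plin M (Jlin v) = -(Jlin (Plin M v)) := by
        intro v
        apply eucl_ext
        intro k
        rw [Plin_coord]
        have hneg : (-(Jlin (Plin M v))) k = -((Jlin (Plin M v)) k) := rfl
        rw [hneg, hJapp, hJapp, Plin_coord, hflippar]
        ring
      have hy' : ∀ i, Plin M (Jlin (y i)) = (εψ * parC i) • (Jlin (y i)) := by
        intro i
        rw [hPJ, hy i, _root_.map_smul, hεφ', ← neg_smul,
          show -(-εψ * parC i) = εψ * parC i by ring]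
      have hgram' : ∀ i i', ⟪x i, x i'⟫_ℂ = ⟪Jlin (y i), Jlin (y i')⟫_ℂ := by
        intro i i'
        rw [hJinner]
        exact hgram i i'
      obtain ⟨U₀, hU₀x, hU₀P⟩ := gram_to_isometry_comm (Plin M) Plin_invol Plin_sa
        (fun i => εψ * parC i) hσpm x (fun i => Jlin (y i)) hgram' hx hy'
      let Ulin : EuclideanSpace ℂ (BitStr M) →ₗ[ℂ] EuclideanSpace ℂ (BitStr M) :=
        Jlin ∘ₗ (U₀.toLinearEquiv : _ →ₗ[ℂ] _)
      have hinner : ∀ u v, ⟪Ulin u, Ulin v⟫_ℂ = ⟪u, v⟫_ℂ := by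
        intro u v
        show ⟪Jlin (U₀ u), Jlin (U₀ v)⟫_ℂ = ⟪u, v⟫_ℂ
        rw [hJinner]
        exact U₀.inner_map_map u v
      have hUx : ∀ i, Ulin ((eqv M).symm fun j => ψ (i, j))
          = (eqv M).symm fun j => φ (i, j) := by
        intro i
        show Jlin (U₀ (x i)) = y i
        rw [hU₀x]
        exact hJ2 _
      have hcomm : ∀ v, Plin M (Ulin v) = (-1 : ℂ) • Ulin (Plin M v) := by
        intro v
        show Plin M (Jlin (U₀ v)) = (-1 : ℂ) • Ulin (Plin M v)
        rw [hPJ, ← hU₀P v, neg_one_smul]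
        rfl
      obtain ⟨Um, h1, h2, h3, h4⟩ := matrix_of_isometry ψ φ Ulin hinner hUx
        (-1) (Or.inr rfl) hcomm
      exact ⟨Um, h1, h2, h3, h4⟩
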